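/- arXiv:2511.02960 — 4 statements merged into one kernel-verified Lean document; each statement's English description precedes it below -/
import Mathlib

section
/- Let P be a convex polygon region given as the intersection of half-planes and suppose C = core(u,v) is convex and lies strictly to the left of the directed segment from i to j. Then the function mapping a point x of C to the angle ∠(i,x,j) attains its maximum on the boundary of C, and this function is unimodal along the boundary of C. -/
open Set

noncomputable section

abbrev E2 := EuclideanSpace ℝ (Fin 2)

/-- 2D cross product in the Euclidean plane. -/
def cross2 (a b : E2) : ℝ := a 0 * b 1 - a 1 * b 0

/-!
For `0 < γ < π`, the points `x` to the left of `ij` with `γ ≤ ∠ i x j` form the closed disc bounded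
by the circle through `i` and `j` on whose left arc `ij` is seen under the angle `γ`, and
`γ < ∠ i x j` holds exactly in the open disc; both follow from the identity
`sin (γ - ∠ i x j) * |ix| * |jx| = sin γ * (|xo|² - |io|²)`, `o` the centre of that circle.
So every superlevel set of the angle on `C` is `C` intersected with a disc, hence convex. If the
maximum `γ` were attained at an interior point `x` of `C`, then `x` would lie on the circle of
angle `γ`, so `C` would meet the open disc near `x`, where the angle exceeds `γ`.
-/

open Metric Real InnerProductGeometry
open scoped RealInnerProductSpace EuclideanGeometry

theorem IsCompact.exists_mem_frontier_isMaxOn {X β : Type*} [TopologicalSpace X]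
    [LinearOrder β] [TopologicalSpace β] [OrderClosedTopology β] {f : X → β} {C : Set X}
    (hC : IsCompact C) (hne : C.Nonempty) (hf : ContinuousOn f C)
    (hint : ∀ x ∈ interior C, ∃ y ∈ C, f x < f y) : ∃ x ∈ frontier C, IsMaxOn f C x := by
  obtain ⟨x, hxC, hmax⟩ := hC.exists_isMaxOn hne hf
  refine ⟨x, ⟨subset_closure hxC, fun hx => ?_⟩, hmax⟩
  obtain ⟨y, hyC, hxy⟩ := hint x hx
  exact (hmax hyC).not_gt hxy

theorem Real.sin_sub_neg_iff {a b : ℝ} (ha : a ∈ Ioo 0 π) (hb : b ∈ Ioo 0 π) :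
    sin (a - b) < 0 ↔ a < b := by
  refine ⟨fun h => ?_, fun h =>
    sin_neg_of_neg_of_neg_pi_lt (by linarith) (by linarith [ha.1, hb.2])⟩
  by_contra! hba
  exact h.not_ge (sin_nonneg_of_nonneg_of_le_pi (by linarith) (by linarith [ha.2, hb.1]))

theorem Real.sin_sub_nonpos_iff {a b : ℝ} (ha : a ∈ Ioo 0 π) (hb : b ∈ Ioo 0 π) :
    sin (a - b) ≤ 0 ↔ a ≤ b := by
  rw [← neg_sub, sin_neg, neg_nonpos, ← not_lt, sin_sub_neg_iff hb ha, not_lt]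

theorem EuclideanSpace.norm_sq_fin_two (v : EuclideanSpace ℝ (Fin 2)) :
    ‖v‖ ^ 2 = v 0 ^ 2 + v 1 ^ 2 := by
  simp [EuclideanSpace.norm_sq_eq, Fin.sum_univ_two]

theorem EuclideanSpace.inner_fin_two (u v : EuclideanSpace ℝ (Fin 2)) :
    ⟪u, v⟫ = u 0 * v 0 + u 1 * v 1 := by
  simp [PiLp.inner_apply, Fin.sum_univ_two, mul_comm]

theorem cross2_sub_sub (i j x : E2) : cross2 (i - x) (j - x) = cross2 (j - i) (x - i) := by
  simp only [cross2, PiLp.sub_apply]; ring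

theorem ne_zero_of_cross2_pos {u v : E2} (h : 0 < cross2 u v) : u ≠ 0 ∧ v ≠ 0 := by
  constructor <;> rintro rfl <;> simp [cross2] at h

theorem sin_angle_mul_norm_mul_norm_eq_cross2 {u v : E2} (h : 0 ≤ cross2 u v) :
    sin (angle u v) * (‖u‖ * ‖v‖) = cross2 u v := by
  rw [sin_angle_mul_norm_mul_norm, ← Real.sqrt_mul_self h]
  congr 1
  simp only [EuclideanSpace.inner_fin_two, cross2]; ring

theorem angle_mem_Ioo_of_cross2_pos {u v : E2} (h : 0 < cross2 u v) : angle u v ∈ Ioo 0 π := by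
  have hsin : 0 < sin (angle u v) := by
    rw [← sin_angle_mul_norm_mul_norm_eq_cross2 h.le] at h
    exact pos_of_mul_pos_left h (by positivity)
  refine ⟨(angle_nonneg u v).lt_of_ne fun hθ => ?_, (angle_le_pi u v).lt_of_ne fun hθ => ?_⟩
  · simp [← hθ] at hsin
  · simp [hθ] at hsin

theorem angle_mem_Ioo_of_left {i j x : E2} (hx : 0 < cross2 (j - i) (x - i)) :
    ∠ i x j ∈ Ioo 0 π := by
  rw [← cross2_sub_sub] at hx
  exact angle_mem_Ioo_of_cross2_pos hx

theorem sin_sub_angle_mul_norm_mul_norm {u v : E2} (h : 0 ≤ cross2 u v) (γ : ℝ) :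
    sin (γ - angle u v) * (‖u‖ * ‖v‖) = sin γ * ⟪u, v⟫ - cos γ * cross2 u v := by
  rw [sin_sub, sub_mul, mul_assoc, mul_assoc, sin_angle_mul_norm_mul_norm_eq_cross2 h,
    cos_angle_mul_norm_mul_norm]

/-- The centre of the circle through `i` and `j` whose arc to the left of `ij` sees the segment
`ij` under the angle `γ`. -/
def arcCenter (i j : E2) (γ : ℝ) : E2 :=
  midpoint ℝ i j + (cot γ / 2) • !₂[i 1 - j 1, j 0 - i 0]

theorem dist_arcCenter_left {i j : E2} {γ : ℝ} (hγ : 0 < sin γ) :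
    dist i (arcCenter i j γ) = dist i j / (2 * sin γ) := by
  rw [eq_div_iff (by positivity), ← sq_eq_sq₀ (by positivity) (by positivity), mul_pow,
    dist_eq_norm, dist_eq_norm, EuclideanSpace.norm_sq_fin_two, EuclideanSpace.norm_sq_fin_two]
  simp only [arcCenter, midpoint_eq_smul_add, invOf_eq_inv, smul_add, cot_eq_cos_div_sin,
    PiLp.sub_apply, PiLp.add_apply, PiLp.smul_apply, smul_eq_mul, Matrix.cons_val_zero,
    Matrix.cons_val_one, Matrix.cons_val_fin_one]
  field_simp
  linear_combination ((i 0 - j 0) ^ 2 + (i 1 - j 1) ^ 2) * sin_sq_add_cos_sq γ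

theorem sin_sub_angle_mul_dist_mul_dist {i j x : E2} (hx : 0 ≤ cross2 (j - i) (x - i)) {γ : ℝ}
    (hγ : sin γ ≠ 0) :
    sin (γ - ∠ i x j) * (dist i x * dist j x)
      = sin γ * (dist x (arcCenter i j γ) ^ 2 - dist i (arcCenter i j γ) ^ 2) := by
  rw [← cross2_sub_sub] at hx
  rw [EuclideanGeometry.angle, dist_eq_norm_vsub E2 i x, dist_eq_norm_vsub E2 j x, vsub_eq_sub,
    vsub_eq_sub, sin_sub_angle_mul_norm_mul_norm hx, dist_eq_norm, dist_eq_norm,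
    EuclideanSpace.norm_sq_fin_two, EuclideanSpace.norm_sq_fin_two]
  simp only [EuclideanSpace.inner_fin_two, cross2, arcCenter, midpoint_eq_smul_add, invOf_eq_inv,
    smul_add, cot_eq_cos_div_sin, PiLp.sub_apply, PiLp.add_apply, PiLp.smul_apply, smul_eq_mul,
    Matrix.cons_val_zero, Matrix.cons_val_one, Matrix.cons_val_fin_one]
  field_simp
  ring

theorem dist_mul_dist_pos_of_left {i j x : E2} (hx : 0 < cross2 (j - i) (x - i)) :
    0 < dist i x * dist j x := by
  rw [← cross2_sub_sub] at hx
  obtain ⟨hix, hjx⟩ := ne_zero_of_cross2_pos hx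
  exact mul_pos (dist_pos.mpr (sub_ne_zero.mp hix)) (dist_pos.mpr (sub_ne_zero.mp hjx))

theorem lt_angle_iff_mem_ball {i j x : E2} (hx : 0 < cross2 (j - i) (x - i)) {γ : ℝ}
    (hγ : γ ∈ Ioo 0 π) :
    γ < ∠ i x j ↔ x ∈ ball (arcCenter i j γ) (dist i (arcCenter i j γ)) := by
  have hs : 0 < sin γ := sin_pos_of_pos_of_lt_pi hγ.1 hγ.2
  have hd := dist_mul_dist_pos_of_left hx
  calc γ < ∠ i x j ↔ sin (γ - ∠ i x j) * (dist i x * dist j x) < 0 * (dist i x * dist j x) := by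
        rw [mul_lt_mul_iff_of_pos_right hd, sin_sub_neg_iff hγ (angle_mem_Ioo_of_left hx)]
    _ ↔ sin γ * (dist x (arcCenter i j γ) ^ 2 - dist i (arcCenter i j γ) ^ 2) < sin γ * 0 := by
        rw [zero_mul, mul_zero, sin_sub_angle_mul_dist_mul_dist hx.le hs.ne']
    _ ↔ _ := by
        rw [mul_lt_mul_iff_of_pos_left hs, sub_neg, sq_lt_sq₀ dist_nonneg dist_nonneg, mem_ball]

theorem le_angle_iff_mem_closedBall {i j x : E2} (hx : 0 < cross2 (j - i) (x - i)) {γ : ℝ}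
    (hγ : γ ∈ Ioo 0 π) :
    γ ≤ ∠ i x j ↔ x ∈ closedBall (arcCenter i j γ) (dist i (arcCenter i j γ)) := by
  have hs : 0 < sin γ := sin_pos_of_pos_of_lt_pi hγ.1 hγ.2
  have hd := dist_mul_dist_pos_of_left hx
  calc γ ≤ ∠ i x j ↔ sin (γ - ∠ i x j) * (dist i x * dist j x) ≤ 0 * (dist i x * dist j x) := by
        rw [mul_le_mul_iff_of_pos_right hd, sin_sub_nonpos_iff hγ (angle_mem_Ioo_of_left hx)]
    _ ↔ sin γ * (dist x (arcCenter i j γ) ^ 2 - dist i (arcCenter i j γ) ^ 2) ≤ sin γ * 0 := by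
        rw [zero_mul, mul_zero, sin_sub_angle_mul_dist_mul_dist hx.le hs.ne']
    _ ↔ _ := by
        rw [mul_le_mul_iff_of_pos_left hs, sub_nonpos, sq_le_sq₀ dist_nonneg dist_nonneg,
          mem_closedBall]

theorem continuousOn_angle_of_left {i j : E2} {C : Set E2}
    (hleft : ∀ p ∈ C, 0 < cross2 (j - i) (p - i)) : ContinuousOn (fun x => ∠ i x j) C := by
  intro x hx
  have h := hleft x hx
  rw [← cross2_sub_sub] at h
  obtain ⟨hix, hjx⟩ := ne_zero_of_cross2_pos h
  exact ((EuclideanGeometry.continuousAt_angle (x := (i, x, j)) (sub_ne_zero.mp hix)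
    (sub_ne_zero.mp hjx)).comp (f := fun y => (i, y, j)) (by fun_prop)).continuousWithinAt

theorem exists_angle_gt_of_mem_interior {i j : E2} {C : Set E2}
    (hleft : ∀ p ∈ C, 0 < cross2 (j - i) (p - i)) {x : E2} (hx : x ∈ interior C) :
    ∃ y ∈ C, ∠ i x j < ∠ i y j := by
  have hxl := hleft x (interior_subset hx)
  have hθ := angle_mem_Ioo_of_left hxl
  have hij : i ≠ j := (sub_ne_zero.mp (ne_zero_of_cross2_pos hxl).1).symm
  set o := arcCenter i j (∠ i x j)
  have hs : 0 < sin (∠ i x j) := sin_pos_of_pos_of_lt_pi hθ.1 hθ.2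
  have hr : dist i o ≠ 0 := by
    rw [dist_arcCenter_left hs]
    exact div_ne_zero (dist_ne_zero.mpr hij) (mul_pos two_pos hs).ne'
  have hxo : x ∈ closure (ball o (dist i o)) := by
    rw [closure_ball o hr, ← le_angle_iff_mem_closedBall hxl hθ]
  obtain ⟨y, hyC, hyo⟩ := mem_closure_iff_nhds.mp hxo _ (isOpen_interior.mem_nhds hx)
  have hyC' := interior_subset hyC
  exact ⟨y, hyC', (lt_angle_iff_mem_ball (hleft y hyC') hθ).mpr hyo⟩

theorem convex_setOf_le_angle {i j : E2} {C : Set E2} (hC : Convex ℝ C)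
    (hleft : ∀ p ∈ C, 0 < cross2 (j - i) (p - i)) (γ : ℝ) :
    Convex ℝ {x ∈ C | γ ≤ ∠ i x j} := by
  rcases le_or_gt γ 0 with hγ0 | hγ0
  · rwa [sep_eq_self_iff_mem_true.mpr fun x _ => hγ0.trans (EuclideanGeometry.angle_nonneg ..)]
  rcases le_or_gt π γ with hγπ | hγπ
  · rw [sep_eq_empty_iff_mem_false.mpr fun x hx hγ =>
      ((angle_mem_Ioo_of_left (hleft x hx)).2.trans_le hγπ).not_ge hγ]
    exact convex_empty
  have hball :
      {x ∈ C | γ ≤ ∠ i x j} = C ∩ closedBall (arcCenter i j γ) (dist i (arcCenter i j γ)) := by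
    ext x
    exact and_congr_right fun hx => le_angle_iff_mem_closedBall (hleft x hx) ⟨hγ0, hγπ⟩
  rw [hball]
  exact hC.inter (convex_closedBall _ _)

theorem stmt5_general (i j : E2) (C : Set E2)
    (hC : Convex ℝ C) (hcomp : IsCompact C) (hne : C.Nonempty)
    (hleft : ∀ p ∈ C, 0 < cross2 (j - i) (p - i)) :
    (∃ x ∈ frontier C, ∀ y ∈ C,
        EuclideanGeometry.angle i y j ≤ EuclideanGeometry.angle i x j) ∧
    (∀ γ : ℝ, Convex ℝ {x ∈ C | γ ≤ EuclideanGeometry.angle i x j}) := by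
  obtain ⟨x, hx, hmax⟩ := hcomp.exists_mem_frontier_isMaxOn hne
    (continuousOn_angle_of_left hleft) fun x hx => exists_angle_gt_of_mem_interior hleft hx
  exact ⟨⟨x, hx, fun y hy => hmax hy⟩, convex_setOf_le_angle hC hleft⟩

/-- if the compact convex set `C` lies strictly to the left of the directed
segment from `i` to `j`, then the map `x ↦ ∠(i,x,j)` (the angle at `x`) attains its
maximum over `C` at a point of the boundary of `C`, and the function is unimodal:
its superlevel sets within `C` are convex (hence along the boundary of `C` the function
is unimodal). -/
theorem stmt5 (i j : E2) (hij : i ≠ j) (C : Set E2)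
    (hC : Convex ℝ C) (hcomp : IsCompact C) (hne : C.Nonempty)
    (hleft : ∀ p ∈ C, 0 < cross2 (j - i) (p - i)) :
    (∃ x ∈ frontier C, ∀ y ∈ C,
        EuclideanGeometry.angle i y j ≤ EuclideanGeometry.angle i x j) ∧
    (∀ γ : ℝ, Convex ℝ {x ∈ C | γ ≤ EuclideanGeometry.angle i x j}) :=
  stmt5_general i j C hC hcomp hne hleft
end
end

section
/- Consider a sliding sequence σ = ((i_1,j_1),...,(i_m,j_m)) of index pairs with consecutive differences in {(1,0),(0,1)}, and maintain for each pair the visibility core core(i-1, j+1), the intersection of the left half-planes of the polygon edges indexed from i-1 to j+1. During a traversal of σ, each point of the plane appears as a vertex of the visibility core in at most one contiguous time interval. -/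
/-!
A point `p` is a vertex of a finite intersection of half-planes iff it lies in it and on two
bounding lines with independent normals: if all bounding lines through `p` are parallel, `p` can
be moved both ways along their common direction without leaving the intersection. In general
position `p` lies on at most two bounding lines, so the vertex `p` at times `t₁` and `t₃` is cut
out by the same two lines, indexed in both windows. Windows slide monotonically, so the window at
time `t₂` contains the intersection of those at `t₁` and `t₃` and, that intersection being
nonempty, lies in their union: `p` is still feasible and on both lines at time `t₂`.
-/

open Set

noncomputable section

abbrev Pt := ℝ × ℝ

def dotp (a p : Pt) : ℝ := a.1 * p.1 + a.2 * p.2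

open Filter Topology

lemma dotp_add_smul (u p v : Pt) (e : ℝ) : dotp u (p + e • v) = dotp u p + e * dotp u v := by
  simp only [dotp, Prod.fst_add, Prod.snd_add, Prod.smul_fst, Prod.smul_snd, smul_eq_mul]
  ring

lemma dotp_smul_add_smul (u : Pt) (s t : ℝ) (x y : Pt) :
    dotp u (s • x + t • y) = s * dotp u x + t * dotp u y := by
  simp only [dotp, Prod.fst_add, Prod.snd_add, Prod.smul_fst, Prod.smul_snd, smul_eq_mul]
  ring

def perpDot (u v : Pt) : ℝ := u.1 * v.2 - u.2 * v.1

@[simp]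
lemma perpDot_self (u : Pt) : perpDot u u = 0 := by
  simp only [perpDot]; ring

lemma eq_of_dotp_eq_of_perpDot_ne_zero {u v x y : Pt} (h : perpDot u v ≠ 0)
    (hu : dotp u x = dotp u y) (hv : dotp v x = dotp v y) : x = y := by
  simp only [dotp] at hu hv
  have h₁ : perpDot u v * (x.1 - y.1) = 0 := by
    simp only [perpDot]; linear_combination v.2 * hu - u.2 * hv
  have h₂ : perpDot u v * (x.2 - y.2) = 0 := by
    simp only [perpDot]; linear_combination u.1 * hv - v.1 * hu
  exact Prod.ext (sub_eq_zero.1 ((mul_eq_zero.1 h₁).resolve_left h))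
    (sub_eq_zero.1 ((mul_eq_zero.1 h₂).resolve_left h))

lemma exists_ne_zero_forall_dotp_eq_zero {ι : Type*} {a : ι → Pt} {T : Set ι}
    (ha : ∀ k ∈ T, a k ≠ 0) (hpar : ∀ k ∈ T, ∀ l ∈ T, perpDot (a k) (a l) = 0) :
    ∃ v : Pt, v ≠ 0 ∧ ∀ k ∈ T, dotp (a k) v = 0 := by
  rcases T.eq_empty_or_nonempty with rfl | ⟨k₀, hk₀⟩
  · exact ⟨(1, 0), by simp, by simp⟩
  refine ⟨(-(a k₀).2, (a k₀).1), fun h => ha k₀ hk₀ ?_, fun l hl => ?_⟩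
  · simp only [Prod.ext_iff, Prod.fst_zero, Prod.snd_zero, neg_eq_zero] at h ⊢
    exact ⟨h.2, h.1⟩
  · have := hpar k₀ hk₀ l hl
    simp only [perpDot] at this
    simp only [dotp]
    linear_combination this

lemma dotp_eq_of_mem_openSegment {u x y p : Pt} {b : ℝ} (hx : dotp u x ≤ b) (hy : dotp u y ≤ b)
    (hp : p ∈ openSegment ℝ x y) (hpb : dotp u p = b) : dotp u x = b := by
  obtain ⟨s, t, hs, ht, hst, rfl⟩ := hp
  rw [dotp_smul_add_smul] at hpb
  have hb : s * b + t * b = b := by linear_combination b * hst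
  have : s * b ≤ s * dotp u x := by linarith [mul_le_mul_of_nonneg_left hy ht.le]
  exact le_antisymm hx (le_of_mul_le_mul_left this hs)

lemma notMem_extremePoints_of_eventually_add_smul_mem {E : Type*} [AddCommGroup E] [Module ℝ E]
    {A : Set E} {p v : E} (hv : v ≠ 0) (h : ∀ᶠ e in 𝓝 (0 : ℝ), p + e • v ∈ A) :
    p ∉ A.extremePoints ℝ := by
  have hneg : ∀ᶠ e in 𝓝 (0 : ℝ), p + (-e) • v ∈ A :=
    (continuous_neg.tendsto' 0 0 neg_zero).eventually h
  obtain ⟨e, he, hpos, hneg⟩ :=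
    (eventually_mem_nhdsWithin.and (nhdsWithin_le_nhds (h.and hneg))).exists (f := 𝓝[>] 0)
  intro hp
  have hseg : p ∈ openSegment ℝ (p + e • v) (p + (-e) • v) :=
    ⟨1 / 2, 1 / 2, by norm_num, by norm_num, by norm_num, by module⟩
  have : e • v = 0 := add_eq_left.1 (hp.2 hpos hneg hseg)
  exact hv ((smul_eq_zero.1 this).resolve_left (ne_of_gt he))

section HalfPlaneCore

variable {ι : Type*} {a : ι → Pt} {c : ι → ℝ} {S T : Finset ι} {p : Pt}

def halfPlaneCore (a : ι → Pt) (c : ι → ℝ) (S : Finset ι) : Set Pt :=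
  ⋂ k ∈ S, {q : Pt | dotp (a k) q ≤ c k}

lemma mem_halfPlaneCore : p ∈ halfPlaneCore a c S ↔ ∀ k ∈ S, dotp (a k) p ≤ c k := by
  simp [halfPlaneCore]

lemma halfPlaneCore_antitone : Antitone (halfPlaneCore a c) := fun _ _ hST _ hp =>
  mem_halfPlaneCore.2 fun k hk => mem_halfPlaneCore.1 hp k (hST hk)

lemma halfPlaneCore_union [DecidableEq ι] :
    halfPlaneCore a c (S ∪ T) = halfPlaneCore a c S ∩ halfPlaneCore a c T := by
  ext p
  simp only [mem_inter_iff, mem_halfPlaneCore, Finset.mem_union]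
  grind

lemma mem_extremePoints_halfPlaneCore_of_perpDot_ne_zero {k l : ι} (hp : p ∈ halfPlaneCore a c S)
    (hk : k ∈ S) (hl : l ∈ S) (hpk : dotp (a k) p = c k) (hpl : dotp (a l) p = c l)
    (hkl : perpDot (a k) (a l) ≠ 0) : p ∈ (halfPlaneCore a c S).extremePoints ℝ := by
  refine ⟨hp, fun x hx y hy hseg => ?_⟩
  have tight : ∀ i ∈ S, dotp (a i) p = c i → dotp (a i) x = dotp (a i) p := fun i hi hpi =>
    (dotp_eq_of_mem_openSegment (mem_halfPlaneCore.1 hx i hi) (mem_halfPlaneCore.1 hy i hi)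
      hseg hpi).trans hpi.symm
  exact eq_of_dotp_eq_of_perpDot_ne_zero hkl (tight k hk hpk) (tight l hl hpl)

lemma eventually_add_smul_mem_halfPlaneCore {v : Pt} (hp : p ∈ halfPlaneCore a c S)
    (hv : ∀ k ∈ S, dotp (a k) p = c k → dotp (a k) v = 0) :
    ∀ᶠ e in 𝓝 (0 : ℝ), p + e • v ∈ halfPlaneCore a c S := by
  simp only [mem_halfPlaneCore, dotp_add_smul, Finset.eventually_all]
  intro k hk
  rcases (mem_halfPlaneCore.1 hp k hk).eq_or_lt with hpk | hpk
  · exact Eventually.of_forall fun e => by rw [hv k hk hpk, mul_zero, add_zero, hpk]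
  · have hcont : Continuous fun e : ℝ => dotp (a k) p + e * dotp (a k) v := by fun_prop
    exact (hcont.tendsto' 0 _ (by simp)).eventually (eventually_le_nhds hpk)

lemma exists_perpDot_ne_zero_of_mem_extremePoints (ha : ∀ k ∈ S, a k ≠ 0)
    (hp : p ∈ (halfPlaneCore a c S).extremePoints ℝ) :
    ∃ k ∈ S, ∃ l ∈ S, k ≠ l ∧ dotp (a k) p = c k ∧ dotp (a l) p = c l ∧
      perpDot (a k) (a l) ≠ 0 := by
  by_contra! hpar
  obtain ⟨v, hv, hvp⟩ := exists_ne_zero_forall_dotp_eq_zero (T := {k | k ∈ S ∧ dotp (a k) p = c k})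
    (fun k hk => ha k hk.1) fun k hk l hl => by
      rcases eq_or_ne k l with rfl | hkl
      · exact perpDot_self _
      · exact hpar k hk.1 l hl.1 hkl hk.2 hl.2
  exact notMem_extremePoints_of_eventually_add_smul_mem hv
    (eventually_add_smul_mem_halfPlaneCore hp.1 fun k hk hpk => hvp k ⟨hk, hpk⟩) hp

end HalfPlaneCore

lemma pair_eq_of_dotp_eq {ι : Type*} {a : ι → Pt} {c : ι → ℝ}
    (hgen : ∀ k l k', k ≠ l → l ≠ k' → k ≠ k' →
      ∀ p : Pt, dotp (a k) p = c k → dotp (a l) p = c l → dotp (a k') p ≠ c k')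
    {p : Pt} {k l k' l' : ι} (hkl : k ≠ l) (hkl' : k' ≠ l')
    (hpk : dotp (a k) p = c k) (hpl : dotp (a l) p = c l)
    (hpk' : dotp (a k') p = c k') (hpl' : dotp (a l') p = c l') :
    ({k', l'} : Set ι) = {k, l} := by
  have hmem : ∀ i, dotp (a i) p = c i → i = k ∨ i = l := fun i hpi => by
    by_contra! hi
    exact hgen k l i hkl hi.2.symm hi.1.symm p hpk hpl hpi
  rcases hmem k' hpk' with rfl | rfl <;> rcases hmem l' hpl' with rfl | rfl
  all_goals first | exact absurd rfl hkl' | rfl | exact Set.pair_comm _ _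

def IsSlidingSequence (m : ℕ) (I J : ℕ → ℕ) : Prop :=
  ∀ t < m, (I (t+1) = I t + 1 ∧ J (t+1) = J t) ∨ (I (t+1) = I t ∧ J (t+1) = J t + 1)

def window (I J : ℕ → ℕ) (t : ℕ) : Finset ℕ := Finset.Icc (I t - 1) (J t + 1)

namespace IsSlidingSequence

variable {m : ℕ} {I J : ℕ → ℕ} {t₁ t₂ t₃ : ℕ}

lemma monotoneOn (hσ : IsSlidingSequence m I J) : MonotoneOn I (Iic m) ∧ MonotoneOn J (Iic m) := by
  constructor <;> refine monotoneOn_of_le_add_one ordConnected_Iic fun t _ _ ht => ?_ <;>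
    rcases hσ t (Nat.lt_of_succ_le ht) with ⟨h, h'⟩ | ⟨h, h'⟩ <;> omega

lemma window_inter_subset (hσ : IsSlidingSequence m I J) (h₁₂ : t₁ ≤ t₂) (h₂₃ : t₂ ≤ t₃)
    (h₃ : t₃ ≤ m) : window I J t₁ ∩ window I J t₃ ⊆ window I J t₂ := by
  obtain ⟨hI, hJ⟩ := hσ.monotoneOn
  have := hI (mem_Iic.2 (h₂₃.trans h₃)) (mem_Iic.2 h₃) h₂₃
  have := hJ (mem_Iic.2 ((h₁₂.trans h₂₃).trans h₃)) (mem_Iic.2 (h₂₃.trans h₃)) h₁₂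
  intro k
  simp only [window, Finset.mem_inter, Finset.mem_Icc]
  omega

lemma window_subset_union (hσ : IsSlidingSequence m I J) (h₁₂ : t₁ ≤ t₂) (h₂₃ : t₂ ≤ t₃)
    (h₃ : t₃ ≤ m) (hne : (window I J t₁ ∩ window I J t₃).Nonempty) :
    window I J t₂ ⊆ window I J t₁ ∪ window I J t₃ := by
  obtain ⟨hI, hJ⟩ := hσ.monotoneOn
  have := hI (mem_Iic.2 ((h₁₂.trans h₂₃).trans h₃)) (mem_Iic.2 (h₂₃.trans h₃)) h₁₂
  have := hJ (mem_Iic.2 (h₂₃.trans h₃)) (mem_Iic.2 h₃) h₂₃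
  obtain ⟨j, hj⟩ := hne
  simp only [window, Finset.mem_inter, Finset.mem_Icc] at hj
  intro k
  simp only [window, Finset.mem_union, Finset.mem_Icc]
  omega

end IsSlidingSequence

theorem stmt6_general (a : ℕ → Pt) (c : ℕ → ℝ)
    (ha : ∀ k, a k ≠ 0)
    (hgen : ∀ k l k', k ≠ l → l ≠ k' → k ≠ k' →
      ∀ p : Pt, dotp (a k) p = c k → dotp (a l) p = c l → dotp (a k') p ≠ c k')
    (m : ℕ) (I J : ℕ → ℕ)
    (hstep : ∀ t < m, (I (t+1) = I t + 1 ∧ J (t+1) = J t) ∨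
                      (I (t+1) = I t ∧ J (t+1) = J t + 1))
    (p : Pt) (t1 t2 t3 : ℕ) (h12 : t1 ≤ t2) (h23 : t2 ≤ t3) (h3m : t3 ≤ m)
    (h1 : p ∈ Set.extremePoints ℝ
      (⋂ k ∈ Finset.Icc (I t1 - 1) (J t1 + 1), {q : Pt | dotp (a k) q ≤ c k}))
    (h3 : p ∈ Set.extremePoints ℝ
      (⋂ k ∈ Finset.Icc (I t3 - 1) (J t3 + 1), {q : Pt | dotp (a k) q ≤ c k})) :
    p ∈ Set.extremePoints ℝ
      (⋂ k ∈ Finset.Icc (I t2 - 1) (J t2 + 1), {q : Pt | dotp (a k) q ≤ c k}) := by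
  change p ∈ (halfPlaneCore a c (window I J t1)).extremePoints ℝ at h1
  change p ∈ (halfPlaneCore a c (window I J t3)).extremePoints ℝ at h3
  change p ∈ (halfPlaneCore a c (window I J t2)).extremePoints ℝ
  have hσ : IsSlidingSequence m I J := hstep
  obtain ⟨k, hk, l, hl, hkl, hpk, hpl, hcross⟩ :=
    exists_perpDot_ne_zero_of_mem_extremePoints (fun k _ => ha k) h1
  obtain ⟨k', hk', l', hl', hkl', hpk', hpl', -⟩ :=
    exists_perpDot_ne_zero_of_mem_extremePoints (fun k _ => ha k) h3
  obtain ⟨hk₃, hl₃⟩ : k ∈ window I J t3 ∧ l ∈ window I J t3 := Set.pair_subset_iff.1 <|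
    pair_eq_of_dotp_eq hgen hkl hkl' hpk hpl hpk' hpl' ▸ Set.pair_subset_iff.2 ⟨hk', hl'⟩
  have hp₂ : p ∈ halfPlaneCore a c (window I J t2) :=
    halfPlaneCore_antitone (hσ.window_subset_union h12 h23 h3m ⟨k, Finset.mem_inter.2 ⟨hk, hk₃⟩⟩)
      (by rw [halfPlaneCore_union]; exact ⟨h1.1, h3.1⟩)
  exact mem_extremePoints_halfPlaneCore_of_perpDot_ne_zero hp₂
    (hσ.window_inter_subset h12 h23 h3m (Finset.mem_inter.2 ⟨hk, hk₃⟩))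
    (hσ.window_inter_subset h12 h23 h3m (Finset.mem_inter.2 ⟨hl, hl₃⟩)) hpk hpl hcross

/-- maintaining `core(i-1, j+1)`, the intersection of half-planes indexed
by the window `[i-1, j+1]`, along a sliding sequence (consecutive index pairs differ
by `(1,0)` or `(0,1)`), every point of the plane is a vertex (extreme point) of the
visibility core during at most one contiguous time interval.  We assume the bounding
lines are in general position: no three of them pass through a common point. -/
theorem stmt6 (a : ℕ → Pt) (c : ℕ → ℝ)
    (ha : ∀ k, a k ≠ 0)
    (hgen : ∀ k l k', k ≠ l → l ≠ k' → k ≠ k' →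
      ∀ p : Pt, dotp (a k) p = c k → dotp (a l) p = c l → dotp (a k') p ≠ c k')
    (m : ℕ) (I J : ℕ → ℕ)
    (hstep : ∀ t < m, (I (t+1) = I t + 1 ∧ J (t+1) = J t) ∨
                      (I (t+1) = I t ∧ J (t+1) = J t + 1))
    (hI1 : ∀ t, 1 ≤ I t) (hIJ : ∀ t, I t ≤ J t)
    (p : Pt) (t1 t2 t3 : ℕ) (h12 : t1 ≤ t2) (h23 : t2 ≤ t3) (h3m : t3 ≤ m)
    (h1 : p ∈ Set.extremePoints ℝ
      (⋂ k ∈ Finset.Icc (I t1 - 1) (J t1 + 1), {q : Pt | dotp (a k) q ≤ c k}))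
    (h3 : p ∈ Set.extremePoints ℝ
      (⋂ k ∈ Finset.Icc (I t3 - 1) (J t3 + 1), {q : Pt | dotp (a k) q ≤ c k})) :
    p ∈ Set.extremePoints ℝ
      (⋂ k ∈ Finset.Icc (I t2 - 1) (J t2 + 1), {q : Pt | dotp (a k) q ≤ c k}) :=
  stmt6_general a c ha hgen m I J hstep p t1 t2 t3 h12 h23 h3m h1 h3
end
end

section
/- Let next: [1, n+1) → [1, 2n+1) be a monotone non-decreasing function. Suppose there exists an optimal cover of the circle [1, n+1] (with wraparound) by k intervals, one of which starts at a point x. Then the greedy sequence x, next(x), next²(x), ..., next^k(x) satisfies next^k(x) ≥ x + n; that is, greedily applying next starting at x yields a cover of size k. -/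
/-- on the circle of circumference `n` parametrized by `[1, n+1)` (with
`u` identified with `u+n`), let `Allowed a b` say that the arc `[a,b]` can be covered
by a single allowed interval; the system is closed under shrinking and invariant under
the wraparound shift.  Let `next u` be the maximal endpoint reachable from `u`, monotone
and shift-equivariant.  If there is an optimal cover by `k` arcs, one of which starts
at `x`, then the greedy sequence satisfies `next^[k] x ≥ x + n`, i.e. greedily applying
`next` from `x` yields a cover of size `k`. -/
theorem stmt9 (n : ℝ) (hn : 0 < n)
    (Allowed : ℝ → ℝ → Prop)
    (hshrink : ∀ a b a' b', Allowed a b → a ≤ a' → a' ≤ b' → b' ≤ b → Allowed a' b')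
    (hshift : ∀ a b, Allowed a b ↔ Allowed (a + n) (b + n))
    (next : ℝ → ℝ)
    (hnext : ∀ u, u ≤ next u ∧ Allowed u (next u) ∧
      ∀ v, u ≤ v → Allowed u v → v ≤ next u)
    (hmono : Monotone next)
    (hper : ∀ u, next (u + n) = next u + n)
    (k : ℕ) (u v : Fin k → ℝ)
    (harcs : ∀ l, Allowed (u l) (v l))
    (hcover : ∀ x : ℝ, 1 ≤ x → x < n + 1 →
      ∃ l, (u l ≤ x ∧ x ≤ v l) ∨ (u l ≤ x + n ∧ x + n ≤ v l))
    (hopt : ∀ (k' : ℕ) (u' v' : Fin k' → ℝ),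
      (∀ l, Allowed (u' l) (v' l)) →
      (∀ x : ℝ, 1 ≤ x → x < n + 1 →
        ∃ l, (u' l ≤ x ∧ x ≤ v' l) ∨ (u' l ≤ x + n ∧ x + n ≤ v' l)) →
      k ≤ k')
    (x : ℝ) (hx1 : 1 ≤ x) (hx2 : x < n + 1)
    (l0 : Fin k) (hstart : u l0 = x) :
    x + n ≤ next^[k] x := by
  classical
  by_contra hcon
  push_neg at hcon
  have hk : 0 < k := l0.pos
  set e : ℕ → ℝ := fun j => next^[j] x with heDef
  have he0 : e 0 = x := rfl
  have hesucc : ∀ j : ℕ, e (j+1) = next (e j) := by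
    intro j
    simp only [heDef]
    exact Function.iterate_succ_apply' next j x
  have hemono : ∀ i j : ℕ, i ≤ j → e i ≤ e j := by
    intro i j hij
    induction j with
    | zero => simp [Nat.le_zero.mp hij]
    | succ j ih =>
      rcases Nat.lt_or_ge i (j+1) with h | h
      · exact le_trans (ih (Nat.lt_succ_iff.mp h)) (by rw [hesucc]; exact (hnext (e j)).1)
      · have hij' : i = j+1 := le_antisymm hij h
        simp [hij']
  have hex : ∀ j : ℕ, x ≤ e j := fun j => he0 ▸ hemono 0 j (Nat.zero_le j)
  have hek : ∀ j : ℕ, j ≤ k → e j < x + n := fun j hj => lt_of_le_of_lt (hemono j k hj) hcon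
  -- allowed shifted arcs
  have hA : ∀ (l : Fin k) (s : ℝ), (s = -n ∨ s = 0 ∨ s = n) → Allowed (u l + s) (v l + s) := by
    intro l s hs
    rcases hs with h | h | h <;> subst h
    · have h1 : Allowed (u l + -n + n) (v l + -n + n) := by
        have : u l + -n + n = u l := by ring
        rw [this]
        have : v l + -n + n = v l := by ring
        rw [this]
        exact harcs l
      exact (hshift _ _).mpr h1
    · simpa using harcs l
    · exact (hshift _ _).mp (harcs l)
  have keystep : ∀ (q r : ℝ) (l : Fin k) (s : ℝ), (s = -n ∨ s = 0 ∨ s = n) →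
      u l + s ≤ q → q ≤ r → r ≤ v l + s → r ≤ next q := by
    intro q r l s hs h1 h2 h3
    exact (hnext q).2.2 r h2 (hshrink _ _ _ _ (hA l s hs) h1 h2 h3)
  -- strict cover lemma
  have hsc : ∀ q : ℝ, x ≤ q → q < x + n →
      ∃ (l : Fin k) (s : ℝ), (s = -n ∨ s = 0 ∨ s = n) ∧ u l + s ≤ q ∧ q < v l + s := by
    intro q hq1 hq2
    set F : Finset ℝ := ((Finset.univ : Finset (Fin k)).image (fun l => u l + -n)) ∪
        ((Finset.univ : Finset (Fin k)).image (fun l => u l + 0)) ∪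
        ((Finset.univ : Finset (Fin k)).image (fun l => u l + n)) with hF
    have hmemF : ∀ (l : Fin k) (s : ℝ), (s = -n ∨ s = 0 ∨ s = n) → u l + s ∈ F := by
      intro l s hs
      rcases hs with h | h | h <;> subst h <;>
        simp only [hF, Finset.mem_union, Finset.mem_image]
      · exact Or.inl (Or.inl ⟨l, Finset.mem_univ l, rfl⟩)
      · exact Or.inl (Or.inr ⟨l, Finset.mem_univ l, rfl⟩)
      · exact Or.inr ⟨l, Finset.mem_univ l, rfl⟩
    have hδ : ∃ δ : ℝ, 0 < δ ∧ ∀ t ∈ F, q < t → q + δ ≤ t := by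
      by_cases hTne : (F.filter (fun t => q < t)).Nonempty
      · refine ⟨(F.filter (fun t => q < t)).min' hTne - q, ?_, ?_⟩
        · have hm := Finset.min'_mem _ hTne
          rw [Finset.mem_filter] at hm
          linarith [hm.2]
        · intro t ht hqt
          have := Finset.min'_le _ t (Finset.mem_filter.mpr ⟨ht, hqt⟩)
          linarith
      · exact ⟨1, one_pos, fun t ht hqt =>
          absurd ⟨t, Finset.mem_filter.mpr ⟨ht, hqt⟩⟩ hTne⟩
    obtain ⟨δ, hδpos, hδF⟩ := hδ
    set ε : ℝ := min δ (x + n - q) / 2 with hεdef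
    have hεpos : 0 < ε := by
      have h2 : 0 < min δ (x + n - q) := lt_min hδpos (by linarith)
      exact div_pos h2 two_pos
    have hεδ : ε + ε ≤ δ := by
      have := min_le_left δ (x + n - q)
      rw [hεdef]; linarith
    have hεn : q + ε < x + n := by
      have := min_le_right δ (x + n - q)
      have h2 : 0 < min δ (x + n - q) := lt_min hδpos (by linarith)
      rw [hεdef]; linarith
    have hcov' : ∃ (l : Fin k) (s : ℝ), (s = -n ∨ s = 0 ∨ s = n) ∧
        u l + s ≤ q + ε ∧ q + ε ≤ v l + s := by
      by_cases hcase : q + ε < n + 1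
      · obtain ⟨l, hl⟩ := hcover (q + ε) (by linarith) hcase
        rcases hl with ⟨h1, h2⟩ | ⟨h1, h2⟩
        · exact ⟨l, 0, Or.inr (Or.inl rfl), by linarith, by linarith⟩
        · exact ⟨l, -n, Or.inl rfl, by linarith, by linarith⟩
      · push_neg at hcase
        obtain ⟨l, hl⟩ := hcover (q + ε - n) (by linarith) (by linarith)
        rcases hl with ⟨h1, h2⟩ | ⟨h1, h2⟩
        · exact ⟨l, n, Or.inr (Or.inr rfl), by linarith, by linarith⟩
        · exact ⟨l, 0, Or.inr (Or.inl rfl), by linarith, by linarith⟩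
    obtain ⟨l, s, hs, h1, h2⟩ := hcov'
    refine ⟨l, s, hs, ?_, by linarith⟩
    by_contra hub
    push_neg at hub
    have := hδF _ (hmemF l s hs) hub
    linarith
  -- chain arcs
  have key : ∀ j : ℕ, ∃ (l : Fin k) (s : ℝ), (s = -n ∨ s = 0 ∨ s = n) ∧
      (j ≤ k → u l + s ≤ e j ∧ e j < v l + s ∧ v l + s ≤ e (j+1)) := by
    intro j
    by_cases hj : j ≤ k
    · obtain ⟨l, s, hs, h1, h2⟩ := hsc (e j) (hex j) (hek j hj)
      refine ⟨l, s, hs, fun _ => ⟨h1, h2, ?_⟩⟩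
      rw [hesucc]
      exact keystep (e j) (v l + s) l s hs h1 (le_of_lt h2) le_rfl
    · exact ⟨l0, 0, Or.inr (Or.inl rfl), fun h => absurd h hj⟩
  choose a sh hshs hprop using key
  have hdiff : ∀ s₁ s₂ : ℝ, (s₁ = -n ∨ s₁ = 0 ∨ s₁ = n) → (s₂ = -n ∨ s₂ = 0 ∨ s₂ = n) →
      s₁ < s₂ → s₁ + n ≤ s₂ := by
    intro s₁ s₂ h1 h2 hlt
    rcases h1 with h | h | h <;> rcases h2 with h' | h' | h' <;> subst h <;> subst h' <;> linarith
  have hinj : ∀ i j : ℕ, i < j → j < k → a i ≠ a j := by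
    intro i j hij hjk hEq
    obtain ⟨hi1, hi2, hi3⟩ := hprop i (by omega)
    obtain ⟨hj1, hj2, hj3⟩ := hprop j (le_of_lt hjk)
    rw [hEq] at hi1 hi2 hi3
    have h4 : e (i+1) ≤ e j := hemono _ _ (by omega)
    have hlt : sh i < sh j := by linarith
    have h5 := hdiff _ _ (hshs i) (hshs j) hlt
    have h6 : e (j+1) < x + n := hek _ (by omega)
    have h7 : x ≤ e i := hex i
    linarith
  have hbinj : Function.Injective (fun i : Fin k => a i.val) := by
    intro i j hEq
    simp only at hEq
    by_contra hne
    have hne' : i.val ≠ j.val := fun h => hne (Fin.ext h)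
    rcases Nat.lt_or_ge i.val j.val with h | h
    · exact hinj _ _ h j.isLt hEq
    · have h' : j.val < i.val := by omega
      exact hinj _ _ h' i.isLt hEq.symm
  have hbsurj : Function.Surjective (fun i : Fin k => a i.val) :=
    Finite.injective_iff_surjective.mp hbinj
  -- final step
  obtain ⟨l, s, hs, h1, h2⟩ := hsc (e k) (hex k) (hek k le_rfl)
  obtain ⟨i, hia⟩ := hbsurj l
  simp only at hia
  obtain ⟨hi1, hi2, hi3⟩ := hprop i.val (le_of_lt i.isLt)
  rw [hia] at hi1 hi2 hi3
  have hik : e (i.val+1) ≤ e k := hemono _ _ i.isLt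
  have hsilt : sh i.val < s := by linarith
  have hsdiff : sh i.val + n ≤ s := hdiff _ _ (hshs i.val) hs hsilt
  by_cases hcase : ∃ j, j < k ∧ u l + s ≤ e j
  · obtain ⟨j, hjk, hj⟩ := hcase
    have hjr : e j ≤ v l + s := le_trans (hemono j k (le_of_lt hjk)) (le_of_lt h2)
    have h8 : v l + s ≤ e (j+1) := by
      rw [hesucc]
      exact keystep (e j) (v l + s) l s hs hj hjr le_rfl
    have h9 : e (j+1) ≤ e k := hemono _ _ hjk
    linarith
  · push_neg at hcase
    have hulx : x < u l + s := he0 ▸ hcase 0 hk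
    have hekk : e k < x + n := hek k le_rfl
    have huln : u l + (s - n) < x := by linarith
    have hs' : (s - n = -n ∨ s - n = 0 ∨ s - n = n) := by
      rcases hs with h | h | h
      · exfalso
        rcases hshs i.val with h' | h' | h' <;> rw [h'] at hsdiff <;> rw [h] at hsdiff <;> linarith
      · left; rw [h]; ring
      · right; left; rw [h]; ring
    have hsile : sh i.val ≤ s - n := by linarith
    have hvx : x ≤ v l + (s - n) := by
      have := hex i.val
      linarith
    have he1 : v l + (s - n) ≤ e 1 := by
      have hE1 : e 1 = next x := by
        have := hesucc 0
        rwa [he0] at this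
      rw [hE1]
      exact keystep x (v l + (s - n)) l (s - n) hs' (le_of_lt huln) hvx le_rfl
    rcases Nat.eq_zero_or_pos i.val with hi0 | hipos
    · -- i = 0
      rw [hi0] at hi1 hi2 hi3 hsile hsilt hsdiff
      rw [he0] at hi1 hi2
      rcases eq_or_lt_of_le hsile with hEqs | hlts
      · -- s = sh 0 + n : use l0
        obtain ⟨m, hma⟩ := hbsurj l0
        simp only at hma
        obtain ⟨hm1, hm2, hm3⟩ := hprop m.val (le_of_lt m.isLt)
        rw [hma] at hm1 hm2
        rw [hstart] at hm1
        rcases Nat.eq_zero_or_pos m.val with hm0 | hmpos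
        · -- l = a 0 = l0
          have hll0 : l = l0 := by rw [← hia, ← hma, hi0, hm0]
          have hux : u l = x := by rw [hll0, hstart]
          rw [hux] at hi1 hulx h1
          have h50 : sh 0 ≤ 0 := by linarith
          have h52 : sh 0 = 0 := by
            rcases hshs 0 with h | h | h
            · linarith
            · exact h
            · linarith
          linarith
        · -- m ≥ 1 : contradiction
          have h60 : sh m.val ≤ 0 := by
            have hmk : e m.val < x + n := hek m.val (le_of_lt m.isLt)
            rcases hshs m.val with h | h | h <;> linarith
          have h61 : x ≤ v l0 := by
            have := hex m.val
            linarith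
          have h63 : v l0 ≤ e 1 := by
            have hE1 : e 1 = next x := by
              have := hesucc 0
              rwa [he0] at this
            rw [hE1]
            exact keystep x (v l0) l0 0 (Or.inr (Or.inl rfl))
              (by rw [hstart]; linarith) h61 (by linarith)
          have h64 : e 1 ≤ e m.val := hemono 1 m.val hmpos
          linarith
      · -- sh 0 < s - n : jump of 2n
        have h70 := hdiff (sh 0) (s - n) (hshs 0) hs' hlts
        have h71 : x + n < v l + (s - n) := by linarith
        have h72 : e 1 ≤ e k := hemono 1 k hk
        linarith
    · -- i ≥ 1
      have h80 : e 1 ≤ e i.val := hemono 1 i.val hipos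
      linarith
end

section
/- In any comparison-based model of computation, deciding whether two sets A, B ⊆ {1,...,n³} of n integers each are disjoint requires Ω(n log n) comparisons in the worst case, even when A is given in sorted order. -/
/-- A comparison tree querying pairs of input positions (from `A`, via `Sum.inl`, or
from `B`, via `Sum.inr`) and outputting a Boolean at the leaves. -/
inductive CmpTree (n : ℕ) : Type
  | leaf : Bool → CmpTree n
  | node : (Fin n ⊕ Fin n) → (Fin n ⊕ Fin n) → (Ordering → CmpTree n) → CmpTree n

namespace CmpTree

def depth {n : ℕ} : CmpTree n → ℕ
  | leaf _ => 0
  | node _ _ k => 1 + max (depth (k .lt)) (max (depth (k .eq)) (depth (k .gt)))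

def eval {n : ℕ} (A B : Fin n → ℤ) : CmpTree n → Bool
  | leaf b => b
  | node i j k => eval A B (k (compare (Sum.elim A B i) (Sum.elim A B j)))

end CmpTree

/-- Valid inputs: `A` and `B` are `n` integers each from `{1,…,n³}`, with `A` sorted. -/
def ValidInput (n : ℕ) (A B : Fin n → ℤ) : Prop :=
  (∀ i, A i ∈ Set.Icc 1 ((n : ℤ)^3)) ∧ (∀ i, B i ∈ Set.Icc 1 ((n : ℤ)^3)) ∧ Monotone A

/-- `t` correctly decides set disjointness on all valid inputs. -/
def CorrectTree (n : ℕ) (t : CmpTree n) : Prop :=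
  ∀ A B : Fin n → ℤ, ValidInput n A B → (t.eval A B = true ↔ ∀ i j, A i ≠ B j)

namespace Stmt10Aux
open CmpTree

def run {n : ℕ} (A B : Fin n → ℤ) : CmpTree n → List Ordering
  | .leaf _ => []
  | .node p q k =>
      compare (Sum.elim A B p) (Sum.elim A B q) ::
        run A B (k (compare (Sum.elim A B p) (Sum.elim A B q)))

lemma length_run_le {n : ℕ} (A B : Fin n → ℤ) :
    ∀ t : CmpTree n, (run A B t).length ≤ t.depth := by
  intro t
  induction t with
  | leaf b => simp [run, depth]
  | node p q k ih =>
      simp only [run, depth, List.length_cons]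
      have h := ih (compare (Sum.elim A B p) (Sum.elim A B q))
      rcases hc : compare (Sum.elim A B p) (Sum.elim A B q) with _ | _ | _ <;>
        rw [hc] at h <;> omega

def Af (n : ℕ) : Fin n → ℤ := fun i => 2 * (i : ℕ) + 2

def Bf {n : ℕ} (σ : Equiv.Perm (Fin n)) : Fin n → ℤ := fun k => 2 * ((σ k : ℕ) : ℤ) + 3

def Cf {n : ℕ} (σ : Equiv.Perm (Fin n)) (j : Fin n) : Fin n → ℤ :=
  fun k => if k = j then 2 * ((σ j : ℕ) : ℤ) + 4 else Bf σ k

end Stmt10Aux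
namespace Stmt10Aux

lemma cmp_def (a b : ℤ) : compare a b = if a < b then Ordering.lt else if a = b then Ordering.eq else Ordering.gt := by
  split_ifs with h1 h2
  · exact compare_lt_iff_lt.2 h1
  · exact compare_eq_iff_eq.2 h2
  · exact compare_gt_iff_gt.2 (by omega)

lemma cmp_eq_iff (a b c d : ℤ) :
    compare a b = compare c d ↔ ((a < b ↔ c < d) ∧ (a = b ↔ c = d)) := by
  rw [cmp_def, cmp_def]
  split_ifs <;> simp <;> omega

def onum : Ordering → ℕ
  | .lt => 0
  | .eq => 1
  | .gt => 2

lemma onum_lt (o : Ordering) : onum o < 3 := by cases o <;> simp [onum]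

lemma onum_inj : ∀ o o' : Ordering, onum o = onum o' → o = o' := by
  intro o o'
  cases o <;> cases o' <;> simp [onum]

def enc : List Ordering → ℕ
  | [] => 0
  | o :: l => onum o + 1 + 4 * enc l

lemma enc_lt : ∀ l : List Ordering, enc l < 4 ^ l.length
  | [] => by simp [enc]
  | o :: l => by
      have h1 := enc_lt l
      have h2 := onum_lt o
      simp only [enc, List.length_cons, pow_succ]
      omega

lemma enc_inj : ∀ l l' : List Ordering, enc l = enc l' → l = l'
  | [], [], _ => rfl
  | [], o :: l, h => by simp only [enc] at h; omega
  | o :: l, [], h => by simp only [enc] at h; omega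
  | o :: l, o' :: l', h => by
      simp only [enc] at h
      have ho := onum_lt o
      have ho' := onum_lt o'
      have h1 : onum o = onum o' := by omega
      have h2 : enc l = enc l' := by omega
      rw [onum_inj _ _ h1, enc_inj l l' h2]


lemma Cf_same {n : ℕ} (σ : Equiv.Perm (Fin n)) (j : Fin n) :
    Cf σ j j = 2 * ((σ j : ℕ) : ℤ) + 4 := if_pos rfl

lemma Cf_ne {n : ℕ} (σ : Equiv.Perm (Fin n)) {j k : Fin n} (hk : k ≠ j) :
    Cf σ j k = Bf σ k := if_neg hk

open CmpTree

lemma node_cmp {n : ℕ} (σ σ' : Equiv.Perm (Fin n)) (j : Fin n)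
    (hj : (σ j : ℕ) < (σ' j : ℕ)) (p q : Fin n ⊕ Fin n)
    (h : compare (Sum.elim (Af n) (Bf σ) p) (Sum.elim (Af n) (Bf σ) q)
       = compare (Sum.elim (Af n) (Bf σ') p) (Sum.elim (Af n) (Bf σ') q)) :
    compare (Sum.elim (Af n) (Cf σ j) p) (Sum.elim (Af n) (Cf σ j) q)
      = compare (Sum.elim (Af n) (Bf σ) p) (Sum.elim (Af n) (Bf σ) q) := by
  rcases p with i | k <;> rcases q with i' | k'
  · rfl
  · by_cases hk : k' = j
    · subst hk
      simp only [Sum.elim_inl, Sum.elim_inr, Cf_same, Af, Bf] at h ⊢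
      rw [cmp_eq_iff] at h ⊢
      omega
    · simp [Cf_ne σ hk]
  · by_cases hk : k = j
    · subst hk
      simp only [Sum.elim_inl, Sum.elim_inr, Cf_same, Af, Bf] at h ⊢
      rw [cmp_eq_iff] at h ⊢
      omega
    · simp [Cf_ne σ hk]
  · by_cases hk : k = j <;> by_cases hk' : k' = j
    · subst hk; subst hk'
      simp only [Sum.elim_inr]
      rw [cmp_def, cmp_def]
      simp
    · subst hk
      have hne : (σ k : ℕ) ≠ (σ k' : ℕ) :=
        fun e => hk' (σ.injective (Fin.val_injective e)).symm
      simp only [Sum.elim_inr, Cf_same, Cf_ne σ hk', Af, Bf] at h ⊢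
      rw [cmp_eq_iff] at h ⊢
      omega
    · subst hk'
      have hne : (σ k : ℕ) ≠ (σ k' : ℕ) :=
        fun e => hk (σ.injective (Fin.val_injective e))
      simp only [Sum.elim_inr, Cf_same, Cf_ne σ hk, Af, Bf] at h ⊢
      rw [cmp_eq_iff] at h ⊢
      omega
    · simp [Cf_ne σ hk, Cf_ne σ hk']


lemma hybrid_run {n : ℕ} (σ σ' : Equiv.Perm (Fin n)) (j : Fin n)
    (hj : (σ j : ℕ) < (σ' j : ℕ)) :
    ∀ t : CmpTree n, run (Af n) (Bf σ) t = run (Af n) (Bf σ') t →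
      eval (Af n) (Cf σ j) t = eval (Af n) (Bf σ) t := by
  intro t
  induction t with
  | leaf b => intro _; rfl
  | node p q k ih =>
      intro h
      simp only [run, List.cons_eq_cons] at h
      obtain ⟨h1, h2⟩ := h
      rw [← h1] at h2
      have hc := node_cmp σ σ' j hj p q h1
      simp only [eval, hc]
      exact ih _ h2

lemma valid_B {n : ℕ} (hn : 2 ≤ n) (σ : Equiv.Perm (Fin n)) :
    ValidInput n (Af n) (Bf σ) := by
  have hcube : 2 * (n : ℤ) + 2 ≤ (n : ℤ)^3 := by
    have h2 : (2 : ℤ) ≤ (n : ℤ) := by exact_mod_cast hn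
    have a1 : 2 * (n : ℤ) ≤ (n : ℤ)^2 := by nlinarith
    have a2 : 2 * (n : ℤ)^2 ≤ (n : ℤ)^3 := by nlinarith
    nlinarith
  refine ⟨fun i => ?_, fun k => ?_, fun a b hab => ?_⟩
  · have := i.isLt
    constructor <;> simp only [Af] <;> push_cast <;> omega
  · have := (σ k).isLt
    constructor <;> simp only [Bf] <;> push_cast <;> omega
  · simp only [Af]
    have : (a : ℕ) ≤ (b : ℕ) := hab
    push_cast
    omega

lemma valid_C {n : ℕ} (hn : 2 ≤ n) (σ : Equiv.Perm (Fin n)) (j : Fin n) :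
    ValidInput n (Af n) (Cf σ j) := by
  obtain ⟨hA, hB, hM⟩ := valid_B hn σ
  refine ⟨hA, fun k => ?_, hM⟩
  by_cases hk : k = j
  · subst hk
    rw [Cf_same]
    have := (σ k).isLt
    have hcube : 2 * (n : ℤ) + 2 ≤ (n : ℤ)^3 := by
      have h2 : (2 : ℤ) ≤ (n : ℤ) := by exact_mod_cast hn
      have a1 : 2 * (n : ℤ) ≤ (n : ℤ)^2 := by nlinarith
      have a2 : 2 * (n : ℤ)^2 ≤ (n : ℤ)^3 := by nlinarith
      nlinarith
    constructor <;> push_cast <;> omega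
  · rw [Cf_ne σ hk]; exact hB k

lemma disjoint_B {n : ℕ} (σ : Equiv.Perm (Fin n)) (i k : Fin n) :
    Af n i ≠ Bf σ k := by
  simp only [Af, Bf]
  omega

lemma run_injective {n : ℕ} (hn : 2 ≤ n) (t : CmpTree n) (ht : CorrectTree n t) :
    Function.Injective (fun σ : Equiv.Perm (Fin n) => run (Af n) (Bf σ) t) := by
  have key : ∀ σ σ' : Equiv.Perm (Fin n), ∀ j : Fin n, (σ j : ℕ) < (σ' j : ℕ) →
      run (Af n) (Bf σ) t = run (Af n) (Bf σ') t → False := by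
    intro σ σ' j hj hrun
    have hm : (σ j : ℕ) + 1 < n := lt_of_le_of_lt hj (σ' j).isLt
    set m : Fin n := ⟨(σ j : ℕ) + 1, hm⟩ with hmdef
    have hAm : Af n m = Cf σ j j := by
      rw [Cf_same]; simp only [Af, hmdef]; push_cast; ring
    have hevalB : eval (Af n) (Bf σ) t = true :=
      (ht (Af n) (Bf σ) (valid_B hn σ)).2 (disjoint_B σ)
    have hevalC : eval (Af n) (Cf σ j) t = true := by
      rw [hybrid_run σ σ' j hj t hrun]; exact hevalB
    have := (ht (Af n) (Cf σ j) (valid_C hn σ j)).1 hevalC m j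
    exact this hAm
  intro σ σ' h
  simp only at h
  by_contra hne
  have : ∃ j, σ j ≠ σ' j := by
    by_contra hall
    push_neg at hall
    exact hne (Equiv.ext hall)
  obtain ⟨j, hj⟩ := this
  have hjv : (σ j : ℕ) ≠ (σ' j : ℕ) := fun e => hj (Fin.val_injective e)
  rcases lt_or_gt_of_ne hjv with hlt | hgt
  · exact key σ σ' j hlt h
  · exact key σ' σ j hgt h.symm

lemma card_bound {n : ℕ} (hn : 2 ≤ n) (t : CmpTree n) (ht : CorrectTree n t) :
    n.factorial ≤ 4 ^ t.depth := by
  classical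
  have hinj : Function.Injective (fun σ : Equiv.Perm (Fin n) =>
      (⟨enc (run (Af n) (Bf σ) t),
        lt_of_lt_of_le (enc_lt _)
          (Nat.pow_le_pow_right (by norm_num) (length_run_le _ _ t))⟩ : Fin (4 ^ t.depth))) := by
    intro σ σ' h
    simp only [Fin.mk.injEq] at h
    exact run_injective hn t ht (enc_inj _ _ h)
  calc n.factorial = Fintype.card (Equiv.Perm (Fin n)) := by
        rw [Fintype.card_perm, Fintype.card_fin]
    _ ≤ Fintype.card (Fin (4 ^ t.depth)) := Fintype.card_le_of_injective _ hinj
    _ = 4 ^ t.depth := Fintype.card_fin _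

lemma factorial_lower (n : ℕ) : (n / 2 + 1) ^ (n / 2) ≤ n.factorial := by
  have h := @Nat.factorial_mul_pow_le_factorial (n / 2) (n - n / 2)
  have hadd : n / 2 + (n - n / 2) = n := by omega
  rw [hadd] at h
  calc (n / 2 + 1) ^ (n / 2) ≤ (n / 2 + 1) ^ (n - n / 2) :=
        Nat.pow_le_pow_right (by omega) (by omega)
    _ ≤ (n / 2).factorial * (n / 2 + 1) ^ (n - n / 2) :=
        Nat.le_mul_of_pos_left _ (Nat.factorial_pos _)
    _ ≤ n.factorial := h



theorem stmt10' :
    ∃ c : ℝ, 0 < c ∧ ∃ N : ℕ, ∀ n ≥ N, ∀ t : CmpTree n,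
      CorrectTree n t → c * (n * Real.log n) ≤ (t.depth : ℝ) := by
  have hlog4 : (0 : ℝ) < Real.log 4 := Real.log_pos (by norm_num)
  refine ⟨1 / (8 * Real.log 4), by positivity, 4, fun n hn t ht => ?_⟩
  set d := t.depth with hd
  set h := n / 2 with hh
  -- counting bound
  have hcard : (n.factorial : ℝ) ≤ (4 : ℝ) ^ d := by
    have := card_bound (by omega) t ht
    calc (n.factorial : ℝ) ≤ ((4 ^ d : ℕ) : ℝ) := by exact_mod_cast this
      _ = (4 : ℝ) ^ d := by push_cast; ring
  have L2 : Real.log n.factorial ≤ (d : ℝ) * Real.log 4 := by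
    have := Real.log_le_log (by exact_mod_cast n.factorial_pos) hcard
    rwa [Real.log_pow] at this
  -- factorial lower bound
  have hfl : ((h + 1 : ℕ) : ℝ) ^ h ≤ (n.factorial : ℝ) := by
    exact_mod_cast factorial_lower n
  have L1 : (h : ℝ) * Real.log ((h : ℝ) + 1) ≤ Real.log n.factorial := by
    have := Real.log_le_log (by positivity) hfl
    rw [Real.log_pow] at this
    have hc : ((h + 1 : ℕ) : ℝ) = (h : ℝ) + 1 := by push_cast; ring
    rwa [hc] at this
  -- n log n ≤ 8 h log (h+1)
  have hx4 : (4 : ℝ) ≤ (n : ℝ) := by exact_mod_cast hn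
  have hh2 : (n : ℝ) ≤ 4 * (h : ℝ) := by
    have : n ≤ 4 * (n / 2) := by omega
    exact_mod_cast this
  have hh1 : (n : ℝ) ≤ 2 * ((h : ℝ) + 1) := by
    have : n ≤ 2 * (n / 2 + 1) := by omega
    exact_mod_cast this
  have hlogn : (0 : ℝ) ≤ Real.log n := Real.log_nonneg (by linarith)
  have hlog2 : Real.log 4 = 2 * Real.log 2 := by
    rw [show (4:ℝ) = 2^2 by norm_num, Real.log_pow]; norm_num
  have hln4 : Real.log 4 ≤ Real.log n := Real.log_le_log (by norm_num) hx4
  have hl : (1 / 2) * Real.log n ≤ Real.log ((h : ℝ) + 1) := by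
    have h1 : Real.log ((n : ℝ) / 2) ≤ Real.log ((h : ℝ) + 1) :=
      Real.log_le_log (by linarith) (by linarith)
    have h2 : Real.log ((n : ℝ) / 2) = Real.log n - Real.log 2 :=
      Real.log_div (by linarith) (by norm_num)
    have h3 : Real.log 2 ≤ (1 / 2) * Real.log n := by
      rw [hlog2] at hln4; linarith
    linarith
  have L3 : (n : ℝ) * Real.log n ≤ 8 * ((h : ℝ) * Real.log ((h : ℝ) + 1)) := by
    have hhnn : (0 : ℝ) ≤ (h : ℝ) := by positivity
    have key : ((n : ℝ) / 4) * ((1 / 2) * Real.log n) ≤ (h : ℝ) * Real.log ((h : ℝ) + 1) :=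
      mul_le_mul (by linarith) hl (by linarith) hhnn
    nlinarith [key]
  have hmain : (n : ℝ) * Real.log n ≤ (d : ℝ) * (8 * Real.log 4) := by linarith
  calc (1 / (8 * Real.log 4)) * ((n : ℝ) * Real.log n)
      ≤ (1 / (8 * Real.log 4)) * ((d : ℝ) * (8 * Real.log 4)) := by
        apply mul_le_mul_of_nonneg_left hmain (by positivity)
    _ = (d : ℝ) := by field_simp

end Stmt10Aux


/-- in the comparison model, deciding whether two sets
`A, B ⊆ {1,…,n³}` of `n` integers each are disjoint requires `Ω(n log n)` comparisons
in the worst case, even when `A` is given in sorted order. -/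
theorem stmt10 :
    ∃ c : ℝ, 0 < c ∧ ∃ N : ℕ, ∀ n ≥ N, ∀ t : CmpTree n,
      CorrectTree n t → c * (n * Real.log n) ≤ (t.depth : ℝ) := by
  exact Stmt10Aux.stmt10'
end
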